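/- Let f, f_0 be as above and B a finite union of disjoint intervals B_j = [x_j − h, x_j + h]. Then (∫_B |f − f_0|)² ≤ 4(L + L_0)² |B|² h^{2β} + (|B|/(2h)) Σ_{j=1}^N (p(j) − p_0(j))². -/

import Mathlib

/-!
Write `g = f - f0`. Cauchy–Schwarz bounds the square of `∫_B |g|` by `|B| ∫_B g²`. On a bin
`B_j` the variance decomposition `∫_{B_j} g² = ∫_{B_j} (g - ḡ)² + 2h ḡ²`, with bin average
`ḡ = (p(j) - p₀(j)) / (2h)`, splits `∫_{B_j} g²` into a deviation part and the part
`(p(j) - p₀(j))² / (2h)`. Since `g` oscillates by at most `(L + L₀) (2h)^β ≤ 2(L + L₀) h^β` on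
`B_j` (as `β ≤ 1`), so does `g - ḡ`, and the deviation part is at most `2h (2(L + L₀) h^β)²`.
Summing over the `N` bins gives the claim.
-/

open MeasureTheory Set Filter Topology Function

section Variance

variable {α : Type*} [MeasurableSpace α] {μ : Measure α} {s : Set α} {g : α → ℝ}

theorem setIntegral_sq_eq_setIntegral_sq_sub_setAverage_add (hs : μ s ≠ ⊤)
    (hg : IntegrableOn g s μ) (hg2 : IntegrableOn (fun x => g x ^ 2) s μ) :
    ∫ x in s, g x ^ 2 ∂μ =
      ∫ x in s, (g x - ⨍ a in s, g a ∂μ) ^ 2 ∂μ + μ.real s * (⨍ a in s, g a ∂μ) ^ 2 := by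
  set m := ⨍ a in s, g a ∂μ
  have hmean : ∫ x in s, g x ∂μ = μ.real s * m := (measure_smul_setAverage g hs).symm
  have hexpand : ∀ x, (g x - m) ^ 2 = g x ^ 2 - 2 * m * g x + m ^ 2 := fun x => by ring
  have hlin : IntegrableOn (fun x => 2 * m * g x) s μ := hg.const_mul _
  have hquad : IntegrableOn (fun x => g x ^ 2 - 2 * m * g x) s μ := hg2.sub hlin
  simp_rw [hexpand]
  rw [integral_add hquad (integrableOn_const hs), integral_sub hg2 hlin,
    integral_const_mul, setIntegral_const, hmean, smul_eq_mul]
  ring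

theorem sq_setIntegral_le_measureReal_mul_setIntegral_sq (hs : μ s ≠ ⊤)
    (hg : IntegrableOn g s μ) (hg2 : IntegrableOn (fun x => g x ^ 2) s μ) :
    (∫ x in s, g x ∂μ) ^ 2 ≤ μ.real s * ∫ x in s, g x ^ 2 ∂μ := by
  rw [← measure_smul_setAverage g hs, smul_eq_mul,
    setIntegral_sq_eq_setIntegral_sq_sub_setAverage_add hs hg hg2]
  have hdev : 0 ≤ ∫ x in s, (g x - ⨍ a in s, g a ∂μ) ^ 2 ∂μ :=
    integral_nonneg fun x => sq_nonneg _
  have hμ : 0 ≤ μ.real s := measureReal_nonneg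
  nlinarith

theorem abs_sub_setAverage_le (hμ₀ : μ s ≠ 0) (hμ : μ s ≠ ⊤) (hg : IntegrableOn g s μ) {c : ℝ}
    (hc : ∀ y ∈ s, ∀ z ∈ s, |g y - g z| ≤ c) {y : α} (hy : y ∈ s) :
    |g y - ⨍ a in s, g a ∂μ| ≤ c := by
  obtain ⟨z₁, hz₁, hle⟩ := exists_le_setAverage hμ₀ hμ hg
  obtain ⟨z₂, hz₂, hge⟩ := exists_setAverage_le hμ₀ hμ hg
  have h₁ := abs_le.1 (hc y hy z₁ hz₁)
  have h₂ := abs_le.1 (hc y hy z₂ hz₂)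
  exact abs_le.2 ⟨by linarith, by linarith⟩

theorem setIntegral_sq_le_of_abs_sub_le (hμ₀ : μ s ≠ 0) (hμ : μ s ≠ ⊤)
    (hg : IntegrableOn g s μ) (hg2 : IntegrableOn (fun x => g x ^ 2) s μ) {c : ℝ}
    (hc : ∀ y ∈ s, ∀ z ∈ s, |g y - g z| ≤ c) :
    ∫ x in s, g x ^ 2 ∂μ ≤ μ.real s * (c ^ 2 + (⨍ a in s, g a ∂μ) ^ 2) := by
  have hdev : ∫ x in s, (g x - ⨍ a in s, g a ∂μ) ^ 2 ∂μ ≤ c ^ 2 * μ.real s := by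
    refine (Real.le_norm_self _).trans (norm_setIntegral_le_of_norm_le_const hμ.lt_top ?_)
    intro y hy
    rw [Real.norm_eq_abs, abs_sq, ← sq_abs]
    exact pow_le_pow_left₀ (abs_nonneg _) (abs_sub_setAverage_le hμ₀ hμ hg hc hy) 2
  rw [setIntegral_sq_eq_setIntegral_sq_sub_setAverage_add hμ hg hg2]
  linarith

end Variance

/-- The class `H(β, L)`; unlike `HolderWith`, the constant `L` is real. -/
def IsHolder (L β : ℝ) (f : ℝ → ℝ) : Prop := ∀ a b, |f a - f b| ≤ L * |a - b| ^ β

namespace IsHolder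

variable {f g : ℝ → ℝ} {L K β : ℝ}

theorem nonneg (hf : IsHolder L β f) : 0 ≤ L := by
  simpa using (abs_nonneg _).trans (hf 1 0)

theorem sub (hf : IsHolder L β f) (hg : IsHolder K β g) :
    IsHolder (L + K) β (fun x => f x - g x) := fun a b =>
  calc |f a - g a - (f b - g b)| = |(f a - f b) - (g a - g b)| := by ring_nf
    _ ≤ |f a - f b| + |g a - g b| := abs_sub _ _
    _ ≤ (L + K) * |a - b| ^ β := by linarith [hf a b, hg a b]

theorem continuous (hf : IsHolder L β f) (hβ : 0 < β) : Continuous f := by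
  refine continuous_iff_continuousAt.2 fun b => tendsto_iff_dist_tendsto_zero.2 ?_
  have hbound : Tendsto (fun a => L * |a - b| ^ β) (𝓝 b) (𝓝 0) := by
    have : Continuous fun a => L * |a - b| ^ β := by fun_prop (disch := exact hβ.le)
    simpa [Real.zero_rpow hβ.ne'] using this.tendsto b
  exact squeeze_zero (fun a => dist_nonneg) (fun a => hf a b) hbound

theorem abs_sub_le_of_mem_Icc (hf : IsHolder L β f) (hβ0 : 0 ≤ β) (hβ1 : β ≤ 1) {x h : ℝ}
    (hh : 0 ≤ h) {y z : ℝ} (hy : y ∈ Icc (x - h) (x + h)) (hz : z ∈ Icc (x - h) (x + h)) :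
    |f y - f z| ≤ 2 * L * h ^ β := by
  have hyz : |y - z| ≤ 2 * h :=
    abs_sub_le_iff.2 ⟨by linarith [hy.2, hz.1], by linarith [hy.1, hz.2]⟩
  have htwo : (2 : ℝ) ^ β ≤ 2 := by
    simpa using Real.rpow_le_rpow_of_exponent_le one_le_two hβ1
  calc |f y - f z| ≤ L * |y - z| ^ β := hf y z
    _ ≤ L * (2 * h) ^ β := by gcongr; exact hf.nonneg
    _ = 2 ^ β * (L * h ^ β) := by rw [Real.mul_rpow zero_le_two hh]; ring
    _ ≤ 2 * (L * h ^ β) := by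
        have := hf.nonneg
        gcongr
    _ = 2 * L * h ^ β := by ring

theorem setIntegral_sq_Icc_le (hf : IsHolder L β f) (hβ0 : 0 < β) (hβ1 : β ≤ 1) {h : ℝ}
    (hh : 0 < h) (x : ℝ) :
    ∫ y in Icc (x - h) (x + h), f y ^ 2 ≤
      2 * h * (2 * L * h ^ β) ^ 2 + (∫ y in Icc (x - h) (x + h), f y) ^ 2 / (2 * h) := by
  have hvol : volume.real (Icc (x - h) (x + h)) = 2 * h := by
    rw [Real.volume_real_Icc_of_le (by linarith)]; ring
  have hvol₀ : volume (Icc (x - h) (x + h)) ≠ 0 := by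
    rw [Real.volume_Icc]; simp; linarith
  have hfc := hf.continuous hβ0
  have key := setIntegral_sq_le_of_abs_sub_le hvol₀ measure_Icc_lt_top.ne
    hfc.integrableOn_Icc (hfc.pow 2).integrableOn_Icc
    fun y hy z hz => hf.abs_sub_le_of_mem_Icc hβ0.le hβ1 hh.le hy hz
  rw [setAverage_eq, hvol, smul_eq_mul] at key
  convert key using 1
  field_simp

end IsHolder

theorem volume_real_iUnion_Icc {ι : Type*} [Fintype ι] {x : ι → ℝ} {h : ℝ} (hh : 0 ≤ h)
    (hdisj : Pairwise (Disjoint on fun i => Icc (x i - h) (x i + h))) :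
    volume.real (⋃ i, Icc (x i - h) (x i + h)) = 2 * Fintype.card ι * h := by
  have hbin : ∀ i, volume.real (Icc (x i - h) (x i + h)) = 2 * h := fun i => by
    rw [Real.volume_real_Icc_of_le (by linarith)]; ring
  rw [measureReal_iUnion_fintype hdisj (fun i => measurableSet_Icc)
    fun i => measure_Icc_lt_top.ne]
  simp only [hbin, Finset.sum_const, Finset.card_univ, nsmul_eq_mul]
  ring

theorem l1_discretization_bound (N : ℕ) (f f0 : ℝ → ℝ) (L L0 β : ℝ)
    (hβ0 : 0 < β) (hβ1 : β ≤ 1)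
    (hf : ∀ a b : ℝ, |f a - f b| ≤ L * |a - b| ^ β)
    (hf0 : ∀ a b : ℝ, |f0 a - f0 b| ≤ L0 * |a - b| ^ β)
    (h : ℝ) (hh : 0 < h) (x : Fin N → ℝ)
    (hdisj : ∀ i j, i ≠ j →
      Disjoint (Set.Icc (x i - h) (x i + h)) (Set.Icc (x j - h) (x j + h))) :
    (∫ y in ⋃ j, Set.Icc (x j - h) (x j + h), |f y - f0 y|) ^ 2
      ≤ 4 * (L + L0) ^ 2 * (2 * N * h) ^ 2 * h ^ (2 * β) +
        ((2 * N * h) / (2 * h)) * ∑ j : Fin N,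
          ((∫ y in Set.Icc (x j - h) (x j + h), f y) -
           (∫ y in Set.Icc (x j - h) (x j + h), f0 y)) ^ 2 := by
  have hg : IsHolder (L + L0) β fun y => f y - f0 y := IsHolder.sub hf hf0
  have hgc := hg.continuous hβ0
  set I : Fin N → Set ℝ := fun j => Icc (x j - h) (x j + h)
  have hB : IsCompact (⋃ j, I j) := isCompact_iUnion fun j => isCompact_Icc
  have hbins : ∀ j, ∫ y in I j, (f y - f0 y) =
      (∫ y in I j, f y) - ∫ y in I j, f0 y := fun j =>
    integral_sub (IsHolder.continuous hf hβ0).integrableOn_Icc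
      (IsHolder.continuous hf0 hβ0).integrableOn_Icc
  have hpow : h ^ (2 * β) = (h ^ β) ^ 2 := by
    rw [mul_comm, Real.rpow_mul hh.le]; norm_num
  calc (∫ y in ⋃ j, I j, |f y - f0 y|) ^ 2
      ≤ volume.real (⋃ j, I j) * ∫ y in ⋃ j, I j, |f y - f0 y| ^ 2 :=
        sq_setIntegral_le_measureReal_mul_setIntegral_sq hB.measure_lt_top.ne
          (hgc.abs.continuousOn.integrableOn_compact hB)
          ((hgc.abs.pow 2).continuousOn.integrableOn_compact hB)
    _ = 2 * N * h * ∑ j, ∫ y in I j, (f y - f0 y) ^ 2 := by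
        simp_rw [sq_abs]
        rw [volume_real_iUnion_Icc hh.le hdisj, Fintype.card_fin,
          integral_iUnion_fintype (f := fun y => (f y - f0 y) ^ 2) (fun j => measurableSet_Icc)
            hdisj fun j => (hgc.pow 2).integrableOn_Icc]
    _ ≤ 2 * N * h * ∑ j, (2 * h * (2 * (L + L0) * h ^ β) ^ 2 +
          (∫ y in I j, (f y - f0 y)) ^ 2 / (2 * h)) := by
        gcongr with j
        exact hg.setIntegral_sq_Icc_le hβ0 hβ1 hh (x j)
    _ = _ := by
        simp only [hbins, Finset.sum_add_distrib, Finset.sum_const, Finset.card_univ,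
          Fintype.card_fin, nsmul_eq_mul, ← Finset.sum_div, hpow]
        field_simp
        ring
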